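/- arXiv:1306.5781 — 2 statements merged into one kernel-verified Lean document; each statement's English description precedes it below -/
import Mathlib

section
/- Define mmse_BPSK(γ) = (1/√(πγ)) e^{-γ} ∫_{-∞}^∞ (1/cosh(2z)) e^{-z²/γ} dz for γ > 0. Then for all γ > 0, mmse_BPSK(γ) ≥ (1 - (1/(2γ))·(π²/8)) · (√π/2)·(1/√γ)·e^{-γ}. -/
/-!
Since `exp (-t) ≥ 1 - t`, the integral in `mmseBPSK γ` is at least
`∫ sech (2z) dz - γ⁻¹ ∫ z² sech (2z) dz = π / 2 - π³ / (32 γ)`.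
The first integral comes from the primitive `arctan ∘ sinh` of `sech`. For the second, expand
`sech x = 2 ∑ (-1)ⁿ exp (-(2n+1) x)` on `x > 0` and integrate termwise against `x²`, which
gives `4 ∑ (-1)ⁿ / (2n+1)³ = 4 β(3) = π³ / 8`, and rescale.
-/

open Real

noncomputable def mmseBPSK (γ : ℝ) : ℝ :=
  (1 / Real.sqrt (Real.pi * γ)) * Real.exp (-γ) *
    ∫ z : ℝ, (1 / Real.cosh (2 * z)) * Real.exp (-z ^ 2 / γ)

open MeasureTheory Filter Set Topology

lemma injective_two_mul_add_one : Function.Injective fun k : ℕ => 2 * k + 1 :=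
  fun _ _ h => by simpa using h

lemma integrable_of_even {E : Type*} [NormedAddCommGroup E] {f : ℝ → E}
    (hf : ∀ x, f (-x) = f x) (h : IntegrableOn f (Ioi 0)) : Integrable f := by
  rw [← integrableOn_univ, ← Iio_union_Ici (a := (0 : ℝ)), integrableOn_union,
    integrableOn_Ici_iff_integrableOn_Ioi]
  refine ⟨?_, h⟩
  rw [← (Measure.measurePreserving_neg (volume : Measure ℝ)).integrableOn_comp_preimage
      (Homeomorph.neg ℝ).measurableEmbedding]
  simpa only [Function.comp_def, hf, neg_preimage, neg_Iio, neg_zero] using h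

lemma hasDerivAt_arctan_sinh (x : ℝ) :
    HasDerivAt (fun z => arctan (sinh z)) (1 / cosh x) x := by
  refine ((hasDerivAt_arctan (sinh x)).comp x (hasDerivAt_sinh x)).congr_deriv ?_
  rw [← cosh_sq']
  field_simp [(cosh_pos x).ne']

lemma tendsto_arctan_sinh_atTop : Tendsto (fun z => arctan (sinh z)) atTop (𝓝 (π / 2)) :=
  (tendsto_nhds_of_tendsto_nhdsWithin tendsto_arctan_atTop).comp sinhOrderIso.tendsto_atTop

lemma integrableOn_Ioi_sech : IntegrableOn (fun z => 1 / cosh z) (Ioi 0) :=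
  integrableOn_Ioi_deriv_of_nonneg' (fun x _ => hasDerivAt_arctan_sinh x)
    (fun x _ => by positivity) tendsto_arctan_sinh_atTop

lemma integral_Ioi_sech : ∫ z in Ioi 0, 1 / cosh z = π / 2 := by
  rw [integral_Ioi_of_hasDerivAt_of_nonneg' (fun x _ => hasDerivAt_arctan_sinh x)
    (fun x _ => by positivity) tendsto_arctan_sinh_atTop]
  simp

lemma integrable_sech : Integrable fun z => 1 / cosh z :=
  integrable_of_even (fun x => by rw [cosh_neg]) integrableOn_Ioi_sech

lemma integral_sech : ∫ z, 1 / cosh z = π := by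
  have := integral_comp_abs (f := fun z => 1 / cosh z)
  simp only [cosh_abs] at this
  rw [this, integral_Ioi_sech]; ring

lemma integral_sech_mul {a : ℝ} (ha : 0 < a) : ∫ z, 1 / cosh (a * z) = π / a := by
  rw [Measure.integral_comp_mul_left (fun z => 1 / cosh z), integral_sech, smul_eq_mul,
    abs_of_pos (inv_pos.2 ha)]
  ring

lemma hasSum_sech {x : ℝ} (hx : 0 < x) :
    HasSum (fun n : ℕ => 2 * (-1) ^ n * exp (-((2 * n + 1) * x))) (1 / cosh x) := by
  have hr : |-exp (-(2 * x))| < 1 := by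
    rw [abs_neg, abs_of_pos (exp_pos _), exp_lt_one_iff]; linarith
  have hterm : (fun n : ℕ => 2 * (-1) ^ n * exp (-((2 * n + 1) * x)))
      = fun n => 2 * exp (-x) * (-exp (-(2 * x))) ^ n := by
    ext n
    rw [neg_pow (exp _), ← exp_nat_mul, mul_assoc, mul_assoc, mul_left_comm (exp _), ← exp_add]
    ring_nf
  have hsum : 1 / cosh x = 2 * exp (-x) * (1 - -exp (-(2 * x)))⁻¹ := by
    rw [cosh_eq, sub_neg_eq_add]
    field_simp
    rw [mul_add, ← exp_add, ← exp_add]; ring_nf; rw [exp_zero, add_comm]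
  rw [hterm, hsum]
  exact (hasSum_geometric_of_abs_lt_one hr).mul_left _

lemma integral_Ioi_sq_mul_exp_neg_mul {c : ℝ} (hc : 0 < c) :
    ∫ x in Ioi 0, x ^ 2 * exp (-(c * x)) = 2 / c ^ 3 := by
  have hGamma : Gamma 3 = 2 := by simp
  calc ∫ x in Ioi 0, x ^ 2 * exp (-(c * x))
      = ∫ x in Ioi 0, x ^ ((3 : ℝ) - 1) * exp (-(c * x)) := by norm_num
    _ = (1 / c) ^ (3 : ℝ) * Gamma 3 := integral_rpow_mul_exp_neg_mul_Ioi three_pos hc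
    _ = 2 / c ^ 3 := by rw [hGamma, rpow_ofNat]; field_simp

lemma hasSum_alternating_inv_odd_cube :
    HasSum (fun k : ℕ => (-1 : ℝ) ^ k / (2 * k + 1) ^ 3) (π ^ 3 / 32) := by
  have h := hasSum_L_function_mod_four_eval_three
  rw [← injective_two_mul_add_one.hasSum_iff] at h
  · convert h using 1
    ext k
    have hsin : sin (π * (2 * k + 1) / 2) = (-1) ^ k := by
      rw [show π * (2 * k + 1) / 2 = π / 2 + k * π by ring, sin_add_nat_mul_pi, sin_pi_div_two,
        mul_one]
    simp only [Function.comp_apply, Nat.cast_add, Nat.cast_mul, Nat.cast_ofNat, Nat.cast_one, hsin]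
    ring
  · rintro n hn
    obtain ⟨k, rfl⟩ : Even n := by
      simpa [← Nat.not_odd_iff_even, Odd, eq_comm, mul_comm] using hn
    rw [show π * (k + k : ℕ) / 2 = k * π by push_cast; ring, sin_nat_mul_pi, mul_zero]

lemma integral_Ioi_sq_mul_sech : ∫ x in Ioi 0, x ^ 2 * (1 / cosh x) = π ^ 3 / 8 := by
  set F : ℕ → ℝ → ℝ := fun n x => 2 * (-1) ^ n * (x ^ 2 * exp (-((2 * n + 1) * x)))
    with hF
  have hc (n : ℕ) : (0 : ℝ) < 2 * n + 1 := by positivity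
  have hintegral (n : ℕ) : ∫ x in Ioi 0, F n x = 4 * ((-1) ^ n / (2 * n + 1) ^ 3) := by
    rw [hF, integral_const_mul, integral_Ioi_sq_mul_exp_neg_mul (hc n)]
    ring
  have hintegrable (n : ℕ) : IntegrableOn (F n) (Ioi 0) :=
    .of_integral_ne_zero <| by rw [hintegral]; have := hc n; positivity
  have hnorm (n : ℕ) : ∫ x in Ioi 0, ‖F n x‖ = 4 / (2 * n + 1) ^ 3 := by
    have habs (x : ℝ) : ‖F n x‖ = 2 * (x ^ 2 * exp (-((2 * n + 1) * x))) := by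
      rw [hF, norm_mul, norm_mul, norm_pow, norm_neg, norm_one, one_pow, mul_one,
        Real.norm_of_nonneg zero_le_two, Real.norm_of_nonneg (by positivity)]
    simp_rw [habs]
    rw [integral_const_mul, integral_Ioi_sq_mul_exp_neg_mul (hc n)]
    ring
  have hsummable : Summable fun n => ∫ x in Ioi 0, ‖F n x‖ := by
    simp_rw [hnorm]
    have hcube := Real.summable_nat_pow_inv.2 (by norm_num : 1 < 3)
    simpa [div_eq_mul_inv] using (hcube.comp_injective injective_two_mul_add_one).mul_left 4
  have hseries : ∫ x in Ioi 0, ∑' n, F n x = ∫ x in Ioi 0, x ^ 2 * (1 / cosh x) := by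
    refine setIntegral_congr_fun measurableSet_Ioi fun x hx => ?_
    rw [← ((hasSum_sech hx).mul_left (x ^ 2)).tsum_eq]
    exact tsum_congr fun n => by ring
  have hbeta := hasSum_alternating_inv_odd_cube.mul_left 4
  rw [show 4 * (π ^ 3 / 32) = π ^ 3 / 8 by ring, ← funext hintegral] at hbeta
  rw [← hseries]
  exact (hasSum_integral_of_summable_integral_norm hintegrable hsummable).unique hbeta

lemma integrable_sq_mul_sech : Integrable fun x => x ^ 2 * (1 / cosh x) :=
  integrable_of_even (fun x => by rw [neg_sq, cosh_neg])
    (.of_integral_ne_zero <| by rw [integral_Ioi_sq_mul_sech]; positivity)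

lemma integral_sq_mul_sech : ∫ x, x ^ 2 * (1 / cosh x) = π ^ 3 / 4 := by
  have := integral_comp_abs (f := fun x => x ^ 2 * (1 / cosh x))
  simp only [sq_abs, cosh_abs] at this
  rw [this, integral_Ioi_sq_mul_sech]; ring

lemma integrable_sech_mul {a : ℝ} (ha : a ≠ 0) : Integrable fun x => 1 / cosh (a * x) :=
  integrable_sech.comp_mul_left' ha

lemma integrable_sq_mul_sech_mul {a : ℝ} (ha : a ≠ 0) :
    Integrable fun x => x ^ 2 * (1 / cosh (a * x)) := by
  convert (integrable_sq_mul_sech.comp_mul_left' ha).div_const (a ^ 2) using 2 with x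
  field_simp

lemma integral_sq_mul_sech_mul {a : ℝ} (ha : 0 < a) :
    ∫ x, x ^ 2 * (1 / cosh (a * x)) = π ^ 3 / (4 * a ^ 3) := by
  have hscale (x : ℝ) :
      x ^ 2 * (1 / cosh (a * x)) = (a * x) ^ 2 * (1 / cosh (a * x)) / a ^ 2 := by
    field_simp
  simp_rw [hscale]
  rw [integral_div, Measure.integral_comp_mul_left (fun x => x ^ 2 * (1 / cosh x)),
    integral_sq_mul_sech, smul_eq_mul, abs_of_pos (inv_pos.2 ha)]
  field_simp

lemma le_integral_mul_exp_neg_sq_div {w : ℝ → ℝ} {γ : ℝ} (hγ : 0 ≤ γ)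
    (hw : ∀ x, 0 ≤ w x) (hw_int : Integrable w) (hw_sq : Integrable fun x => x ^ 2 * w x) :
    (∫ x, w x) - (∫ x, x ^ 2 * w x) / γ ≤ ∫ x, w x * exp (-x ^ 2 / γ) := by
  have hexp_le (x : ℝ) : exp (-x ^ 2 / γ) ≤ 1 :=
    exp_le_one_iff.2 (div_nonpos_of_nonpos_of_nonneg (neg_nonpos.2 (sq_nonneg x)) hγ)
  have hint : Integrable fun x => w x * exp (-x ^ 2 / γ) := by
    refine hw_int.mono' (hw_int.aestronglyMeasurable.mul (by fun_prop)) (.of_forall fun x => ?_)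
    rw [Real.norm_of_nonneg (mul_nonneg (hw x) (exp_pos _).le)]
    exact mul_le_of_le_one_right (hw x) (hexp_le x)
  rw [← integral_div, ← integral_sub hw_int (hw_sq.div_const γ)]
  refine integral_mono (hw_int.sub (hw_sq.div_const γ)) hint fun x => ?_
  calc w x - x ^ 2 * w x / γ = w x * (-x ^ 2 / γ + 1) := by ring
    _ ≤ w x * exp (-x ^ 2 / γ) := mul_le_mul_of_nonneg_left (add_one_le_exp _) (hw x)

theorem mmseBPSK_lower (γ : ℝ) (hγ : 0 < γ) :
    (1 - (1 / (2 * γ)) * (Real.pi ^ 2 / 8)) *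
        ((Real.sqrt Real.pi / 2) * (1 / Real.sqrt γ) * Real.exp (-γ)) ≤ mmseBPSK γ := by
  have hbound := le_integral_mul_exp_neg_sq_div hγ.le (fun z => by positivity)
    (integrable_sech_mul two_ne_zero) (integrable_sq_mul_sech_mul two_ne_zero)
  rw [integral_sech_mul two_pos, integral_sq_mul_sech_mul two_pos] at hbound
  have hsqrt_pi : sqrt π ^ 2 = π := sq_sqrt pi_pos.le
  calc (1 - 1 / (2 * γ) * (π ^ 2 / 8)) * (sqrt π / 2 * (1 / sqrt γ) * exp (-γ))
      = 1 / sqrt (π * γ) * exp (-γ) * (π / 2 - π ^ 3 / (4 * 2 ^ 3) / γ) := by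
        rw [sqrt_mul pi_pos.le]
        field_simp
        rw [hsqrt_pi]
        ring
    _ ≤ mmseBPSK γ := by unfold mmseBPSK; gcongr
end

section
/- Let X be uniformly distributed on {x_1,…,x_M} ⊂ ℝ with x_{m+1} - x_m = d for all m, M ≥ 2. Fix y ≤ (x_1+x_M)/2, let p_m = e^{-γ(y-x_m)²}/∑_{m'} e^{-γ(y-x_{m'})²} be the posterior probabilities at SNR γ > 0, s = ∑_m p_m x_m the conditional mean, and φ = ∑_m p_m (x_m - s)². Let X̂ be uniform on {x_1,…,x_{M-1}} with corresponding conditional variance φ̂ at the same y. Then φ ≥ φ̂. -/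
open Finset

/-- Posterior probability of the m-th constellation point given observation `y`
at SNR `γ`, for a uniform input on `{x 0, …, x (M-1)}`. -/
noncomputable def post (γ y : ℝ) (x : ℕ → ℝ) (M m : ℕ) : ℝ :=
  Real.exp (-γ * (y - x m) ^ 2) / ∑ m' ∈ Finset.range M, Real.exp (-γ * (y - x m') ^ 2)

/-- Conditional mean of the input given the observation. -/
noncomputable def condMean (γ y : ℝ) (x : ℕ → ℝ) (M : ℕ) : ℝ :=
  ∑ m ∈ Finset.range M, post γ y x M m * x m

/-- Pointwise conditional variance of the input given the observation. -/
noncomputable def condVar (γ y : ℝ) (x : ℕ → ℝ) (M : ℕ) : ℝ :=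
  ∑ m ∈ Finset.range M, post γ y x M m * (x m - condMean γ y x M) ^ 2

lemma condMean_eq (γ y : ℝ) (x : ℕ → ℝ) (N : ℕ) :
    condMean γ y x N = (∑ m ∈ range N, Real.exp (-γ * (y - x m) ^ 2) * x m) /
      (∑ m ∈ range N, Real.exp (-γ * (y - x m) ^ 2)) := by
  simp only [condMean, post, div_mul_eq_mul_div, ← Finset.sum_div]

lemma condVar_eq (γ y : ℝ) (x : ℕ → ℝ) (N : ℕ) :
    condVar γ y x N =
      (∑ m ∈ range N, Real.exp (-γ * (y - x m) ^ 2) *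
        (x m - (∑ m ∈ range N, Real.exp (-γ * (y - x m) ^ 2) * x m) /
          (∑ m ∈ range N, Real.exp (-γ * (y - x m) ^ 2))) ^ 2) /
      (∑ m ∈ range N, Real.exp (-γ * (y - x m) ^ 2)) := by
  simp only [condVar, post, condMean_eq, div_mul_eq_mul_div, ← Finset.sum_div]

lemma expand_sum1 (K : ℕ) (w x : ℕ → ℝ) (t : ℝ) :
    ∑ m ∈ range K, w m * (x m - t)
      = (∑ m ∈ range K, w m * x m) - t * (∑ m ∈ range K, w m) := by
  induction K with
  | zero => simp
  | succ n ih => simp [Finset.sum_range_succ, ih]; ring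

lemma expand_sum2 (K : ℕ) (w x : ℕ → ℝ) (t : ℝ) :
    ∑ m ∈ range K, w m * (x m - t) ^ 2
      = (∑ m ∈ range K, w m * x m ^ 2) - 2 * t * (∑ m ∈ range K, w m * x m)
        + t ^ 2 * (∑ m ∈ range K, w m) := by
  induction K with
  | zero => simp
  | succ n ih => simp [Finset.sum_range_succ, ih]; ring

lemma pairing_bound (K : ℕ) (hK : 1 ≤ K) (w x : ℕ → ℝ) (d : ℝ) (hd : 0 ≤ d)
    (hw : ∀ m, 0 < w m)
    (hxm : ∀ m, m ≤ K → x m = x 0 + m * d)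
    (hww : ∀ m, m ≤ K → 2 * m ≤ K → w (K - m) ≤ w m) :
    ∑ m ∈ range K, w m * (x m - (x 0 + K * d / 2)) ≤ 0 := by
  set c := x 0 + K * d / 2 with hc
  obtain ⟨N, rfl⟩ : ∃ N, K = N + 1 := ⟨K - 1, by omega⟩
  rw [Finset.sum_range_succ']
  have h0 : w 0 * (x 0 - c) ≤ 0 := by
    apply mul_nonpos_of_nonneg_of_nonpos (hw 0).le
    have : (0:ℝ) ≤ (N+1 : ℕ) * d / 2 := by positivity
    rw [hc]; linarith
  have hrefl : ∑ i ∈ range N, w (N - i) * (x (N - i) - c)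
      = ∑ i ∈ range N, w (i + 1) * (x (i + 1) - c) := by
    rw [← Finset.sum_range_reflect (fun i => w (i + 1) * (x (i + 1) - c)) N]
    apply Finset.sum_congr rfl
    intro i hi
    rw [Finset.mem_range] at hi
    have he : N - 1 - i + 1 = N - i := by omega
    simp only [he]
  have hterm : ∀ i ∈ range N, w (i + 1) * (x (i + 1) - c) + w (N - i) * (x (N - i) - c) ≤ 0 := by
    intro i hi
    rw [Finset.mem_range] at hi
    have hi1 : i + 1 ≤ N + 1 := by omega
    have hNi : N - i ≤ N + 1 := by omega
    have hcast : ((N - i : ℕ) : ℝ) = (N : ℝ) - i := by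
      push_cast [Nat.cast_sub hi.le]; ring
    rw [hxm (i+1) hi1, hxm (N - i) hNi, hcast, hc]
    push_cast
    rcases le_or_gt (2 * (i + 1)) (N + 1) with hle | hlt
    · have hw1 : w (N + 1 - (i + 1)) ≤ w (i + 1) := hww (i + 1) hi1 hle
      have he : N + 1 - (i + 1) = N - i := by omega
      rw [he] at hw1
      have ha : (i : ℝ) + 1 - ((N:ℝ)+1)/2 ≤ 0 := by
        have : (2 : ℝ) * (i + 1) ≤ (N : ℝ) + 1 := by exact_mod_cast hle
        linarith
      nlinarith [hw (i+1), hw (N-i), mul_nonneg (mul_nonneg hd (neg_nonneg.2 ha)) (sub_nonneg.2 hw1)]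
    · have h2 : 2 * (N - i) ≤ N + 1 := by omega
      have hw1 : w (N + 1 - (N - i)) ≤ w (N - i) := hww (N - i) hNi h2
      have he : N + 1 - (N - i) = i + 1 := by omega
      rw [he] at hw1
      have ha : (0:ℝ) ≤ (i : ℝ) + 1 - ((N:ℝ)+1)/2 := by
        have : (N : ℝ) + 1 < (2 : ℝ) * (i + 1) := by exact_mod_cast hlt
        linarith
      nlinarith [mul_nonneg (mul_nonneg hd ha) (sub_nonneg.2 hw1)]
  have hsum : (∑ i ∈ range N, w (i + 1) * (x (i + 1) - c))
      + (∑ i ∈ range N, w (N - i) * (x (N - i) - c)) ≤ 0 := by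
    rw [← Finset.sum_add_distrib]
    exact Finset.sum_nonpos hterm
  rw [hrefl] at hsum
  linarith

set_option maxHeartbeats 1000000 in
lemma aux_main (K : ℕ) (hK : 1 ≤ K) (w x : ℕ → ℝ) (d : ℝ) (hd : 0 < d)
    (hw : ∀ m, 0 < w m)
    (hxm : ∀ m, m ≤ K → x m = x 0 + m * d)
    (hwK : ∀ m, m ≤ K → w K ≤ w m)
    (hww : ∀ m, m ≤ K → 2 * m ≤ K → w (K - m) ≤ w m) :
    (∑ m ∈ range K, w m * (x m - (∑ m ∈ range K, w m * x m) / (∑ m ∈ range K, w m)) ^ 2) /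
        (∑ m ∈ range K, w m)
      ≤ (∑ m ∈ range (K + 1), w m *
            (x m - (∑ m ∈ range (K + 1), w m * x m) / (∑ m ∈ range (K + 1), w m)) ^ 2) /
          (∑ m ∈ range (K + 1), w m) := by
  set A := ∑ m ∈ range K, w m with hA
  set B := ∑ m ∈ range K, w m * x m with hB
  set C := ∑ m ∈ range K, w m * x m ^ 2 with hC
  have hApos : 0 < A := Finset.sum_pos (fun m _ => hw m) (by rw [Finset.nonempty_range_iff]; omega)
  have hupos : 0 < w K := hw K
  set u := w K with hu
  set z := x K with hz0
  have hSA : ∑ m ∈ range (K + 1), w m = A + u := Finset.sum_range_succ w K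
  have hSB : ∑ m ∈ range (K + 1), w m * x m = B + u * z := Finset.sum_range_succ _ K
  have hSC : ∑ m ∈ range (K + 1), w m * x m ^ 2 = C + u * z ^ 2 := Finset.sum_range_succ _ K
  have hSpos : 0 < A + u := by linarith
  have hz : z = x 0 + K * d := hxm K le_rfl
  have kR1 : (1 : ℝ) ≤ (K : ℝ) := by exact_mod_cast hK
  -- rewrite both sides in closed form
  rw [expand_sum2, expand_sum2, hSA, hSB, hSC, ← hA, ← hB, ← hC]
  -- bound on B
  have hBc : B ≤ A * (x 0 + K * d / 2) := by
    have hp := pairing_bound K hK w x d hd.le hw hxm hww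
    rw [expand_sum1] at hp
    rw [← hA, ← hB] at hp
    nlinarith
  -- mean below right end
  have hmean : (K : ℝ) * d / 2 ≤ z - B / A := by
    have : B / A ≤ x 0 + K * d / 2 := (div_le_iff₀ hApos).2 (by linarith [hBc])
    rw [hz]; linarith
  -- A ≥ K * u
  have hKu : (K : ℝ) * u ≤ A := by
    have h1 : ∑ m ∈ range K, u ≤ ∑ m ∈ range K, w m :=
      Finset.sum_le_sum fun m hm => hwK m (le_of_lt (Finset.mem_range.1 hm))
    simpa using h1
  have h1p : (K : ℝ) / (K + 1) ≤ A / (A + u) := by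
    rw [div_le_div_iff₀ (by linarith) hSpos]
    nlinarith
  -- variance bound for reduced constellation
  have hVhat : C - 2 * (B / A) * B + (B / A) ^ 2 * A ≤ A * (((K : ℝ) - 1) * d / 2) ^ 2 := by
    set c' := x 0 + ((K : ℝ) - 1) * d / 2 with hc'
    have hBA : B / A * A = B := div_mul_cancel₀ _ hApos.ne'
    have e2 : ∑ m ∈ range K, w m * (x m - c') ^ 2 = C - 2 * c' * B + c' ^ 2 * A :=
      expand_sum2 K w x c'
    have hle1 : C - 2 * (B / A) * B + (B / A) ^ 2 * A ≤ C - 2 * c' * B + c' ^ 2 * A := by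
      nlinarith [sq_nonneg (B / A - c'), hApos, sq_nonneg (B - c' * A)]
    have hle2 : ∑ m ∈ range K, w m * (x m - c') ^ 2
        ≤ ∑ m ∈ range K, w m * (((K : ℝ) - 1) * d / 2) ^ 2 := by
      apply Finset.sum_le_sum
      intro m hm
      rw [Finset.mem_range] at hm
      have hmK : (m : ℝ) ≤ (K : ℝ) - 1 := by
        have : (m : ℝ) + 1 ≤ (K : ℝ) := by exact_mod_cast hm
        linarith
      apply mul_le_mul_of_nonneg_left _ (hw m).le
      rw [hxm m hm.le, hc']
      have hm0 : (0 : ℝ) ≤ (m : ℝ) := Nat.cast_nonneg m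
      have hb1 : (m : ℝ) * d ≤ ((K : ℝ) - 1) * d := mul_le_mul_of_nonneg_right hmK hd.le
      have hb0 : (0 : ℝ) ≤ (m : ℝ) * d := mul_nonneg hm0 hd.le
      apply sq_le_sq'
      · linarith
      · linarith
    have hle3 : ∑ m ∈ range K, w m * (((K : ℝ) - 1) * d / 2) ^ 2
        = A * (((K : ℝ) - 1) * d / 2) ^ 2 := by
      rw [← Finset.sum_mul]
    linarith [e2 ▸ (hle2.trans_eq hle3), hle1]
  -- numeric comparison
  have hnum : A * (((K : ℝ) - 1) * d / 2) ^ 2 ≤ A * ((K : ℝ) / (K + 1) * ((K : ℝ) * d / 2) ^ 2) := by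
    apply mul_le_mul_of_nonneg_left _ hApos.le
    rw [div_mul_eq_mul_div, le_div_iff₀ (by linarith)]
    nlinarith [sq_nonneg d, mul_nonneg (sq_nonneg d) (by nlinarith : (0:ℝ) ≤ (K:ℝ)^2 + K - 1)]
  have hkey : C - 2 * (B / A) * B + (B / A) ^ 2 * A
      ≤ A * (A / (A + u) * (z - B / A) ^ 2) := by
    have h2 : ((K : ℝ) * d / 2) ^ 2 ≤ (z - B / A) ^ 2 := by
      have h0 : (0 : ℝ) ≤ (K : ℝ) * d / 2 := by positivity
      nlinarith
    have h3 : (K : ℝ) / (K + 1) * ((K : ℝ) * d / 2) ^ 2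
        ≤ A / (A + u) * (z - B / A) ^ 2 := by
      apply mul_le_mul h1p h2 (by positivity) (by positivity)
    calc C - 2 * (B / A) * B + (B / A) ^ 2 * A
        ≤ A * (((K : ℝ) - 1) * d / 2) ^ 2 := hVhat
      _ ≤ A * ((K : ℝ) / (K + 1) * ((K : ℝ) * d / 2) ^ 2) := hnum
      _ ≤ A * (A / (A + u) * (z - B / A) ^ 2) := mul_le_mul_of_nonneg_left h3 hApos.le
  -- final identity-based conclusion
  have hid : (C + u * z ^ 2 - 2 * ((B + u * z) / (A + u)) * (B + u * z)
        + ((B + u * z) / (A + u)) ^ 2 * (A + u)) / (A + u)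
      - (C - 2 * (B / A) * B + (B / A) ^ 2 * A) / A
      = (u / (A + u)) * (A / (A + u) * (z - B / A) ^ 2
          - (C - 2 * (B / A) * B + (B / A) ^ 2 * A) / A) := by
    field_simp
    ring
  have hfac : 0 ≤ (u / (A + u)) * (A / (A + u) * (z - B / A) ^ 2
      - (C - 2 * (B / A) * B + (B / A) ^ 2 * A) / A) := by
    apply mul_nonneg (by positivity)
    rw [sub_nonneg, div_le_iff₀ hApos]
    linarith [hkey]
  linarith [hid ▸ hfac]


theorem pam_remove_farthest_point
    (M : ℕ) (hM : 2 ≤ M) (x : ℕ → ℝ) (d γ y : ℝ)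
    (hd : 0 < d) (hγ : 0 < γ)
    (hx : ∀ m : ℕ, m + 1 < M → x (m + 1) - x m = d)
    (hy : y ≤ (x 0 + x (M - 1)) / 2) :
    condVar γ y x (M - 1) ≤ condVar γ y x M := by
  obtain ⟨K, rfl⟩ : ∃ K, M = K + 1 := ⟨M - 1, by omega⟩
  have hK : 1 ≤ K := by omega
  simp only [Nat.add_sub_cancel] at hy ⊢
  have hxm : ∀ m, m ≤ K → x m = x 0 + m * d := by
    intro m hm
    induction m with
    | zero => simp
    | succ n ih =>
      have h1 : x (n + 1) - x n = d := hx n (by omega)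
      have h2 := ih (by omega)
      push_cast
      linarith
  rw [hxm K le_rfl] at hy
  set w : ℕ → ℝ := fun m => Real.exp (-γ * (y - x m) ^ 2) with hw
  have hsq : ∀ a b : ℕ, a ≤ K → b ≤ K → a ≤ b → 2 * y ≤ x a + x b → w b ≤ w a := by
    intro a b ha hb hab hmid
    rw [hw]
    simp only
    rw [Real.exp_le_exp]
    have hsq2 : (y - x a) ^ 2 ≤ (y - x b) ^ 2 := by
      have hxb : x a ≤ x b := by
        rw [hxm a ha, hxm b hb]
        have : (a : ℝ) ≤ (b : ℝ) := by exact_mod_cast hab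
        nlinarith
      nlinarith [mul_nonneg (sub_nonneg.2 hxb) (by linarith : (0:ℝ) ≤ x a + x b - 2 * y)]
    nlinarith
  have hwK : ∀ m, m ≤ K → w K ≤ w m := by
    intro m hm
    apply hsq m K hm le_rfl hm
    have hm0 : (0 : ℝ) ≤ (m : ℝ) * d := by positivity
    rw [hxm m hm, hxm K le_rfl]
    linarith
  have hww : ∀ m, m ≤ K → 2 * m ≤ K → w (K - m) ≤ w m := by
    intro m hm h2m
    apply hsq m (K - m) hm (by omega) (by omega)
    have hcast : ((K - m : ℕ) : ℝ) = (K : ℝ) - m := by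
      push_cast [Nat.cast_sub hm]
      ring
    rw [hxm m hm, hxm (K - m) (by omega), hcast]
    linarith
  rw [condVar_eq, condVar_eq]
  exact aux_main K hK w x d hd (fun m => Real.exp_pos _) hxm hwK hww
end
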